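/- Fix τ > 2, ε ∈ (0, 1/(2τ−1)), and constants c₁, c₂ > 0. Then there exist constants C₁, C₂ > 0 and n₀, depending only on τ, ε, c₁, c₂, such that for all n ≥ n₀ the following holds: if d₁,…,dₙ are any nonnegative real numbers whose order statistics satisfy c₁·(n/i)^{1/(τ−1)} ≤ d^{(i)} ≤ c₂·(n/i)^{1/(τ−1)} for every integer i with ⌈n^ε⌉ ≤ i ≤ n, then for every integer i with ⌊n^{1−2ε(τ−1)}⌋ ≤ i ≤ ⌊n^{1−1.1ε(τ−1)}⌋ one has n^ε ≤ d^{(i)} ≤ n^{3ε}, and moreover C₁·n^{1−1.1ε(τ−2)} ≤ Σ_{i=⌊n^{1−2ε(τ−1)}⌋}^{⌊n^{1−1.1ε(τ−1)}⌋} d^{(i)} ≤ C₂·n^{1−1.1ε(τ−2)}. -/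
import Mathlib

open Real Finset Filter

lemma sum_rpow_neg_le (s : ℝ) (hs0 : 0 < s) (hs1 : s < 1) (B : ℕ) :
    ∑ i ∈ Finset.Icc 1 B, (i : ℝ) ^ (-s) ≤ (B : ℝ) ^ (1 - s) / (1 - s) := by
  have ht : 0 < 1 - s := by linarith
  induction B with
  | zero => simp [Real.zero_rpow ht.ne']
  | succ B ih =>
    rw [Finset.sum_Icc_succ_top (by omega)]
    have hB1 : (0:ℝ) < (B:ℝ) + 1 := by positivity
    have hx : ((B:ℝ)/((B:ℝ)+1)) ^ (1-s) ≤ (1-s) * ((B:ℝ)/((B:ℝ)+1)) + s * 1 := by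
      have := Real.geom_mean_le_arith_mean2_weighted ht.le hs0.le
        (by positivity : (0:ℝ) ≤ (B:ℝ)/((B:ℝ)+1)) zero_le_one (by ring)
      simpa using this
    have hBt : (B:ℝ) ^ (1-s) ≤ ((B:ℝ)+1) ^ (1-s) - (1-s) * ((B:ℝ)+1) ^ (-s) := by
      have hdiv : ((B:ℝ)/((B:ℝ)+1)) ^ (1-s) * ((B:ℝ)+1) ^ (1-s) = (B:ℝ) ^ (1-s) := by
        rw [Real.div_rpow (by positivity) hB1.le]
        field_simp
      have h2 := mul_le_mul_of_nonneg_right hx (Real.rpow_nonneg hB1.le (1-s))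
      rw [hdiv] at h2
      have hpow : ((B:ℝ)+1) ^ (1-s) / ((B:ℝ)+1) = ((B:ℝ)+1) ^ (-s) := by
        have := (Real.rpow_sub hB1 (1-s) 1).symm
        rw [Real.rpow_one, show (1:ℝ)-s-1 = -s by ring] at this
        exact this
      calc (B:ℝ) ^ (1-s) ≤ ((1-s) * ((B:ℝ)/((B:ℝ)+1)) + s * 1) * ((B:ℝ)+1) ^ (1-s) := h2
        _ = ((B:ℝ)+1) ^ (1-s) - (1-s) * (((B:ℝ)+1) ^ (1-s) / ((B:ℝ)+1)) := by
            field_simp ; ring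
        _ = ((B:ℝ)+1) ^ (1-s) - (1-s) * ((B:ℝ)+1) ^ (-s) := by rw [hpow]
    have key : ((B:ℝ)+1) ^ (-s) ≤ (((B:ℝ)+1) ^ (1-s) - (B:ℝ) ^ (1-s)) / (1-s) := by
      rw [le_div_iff₀ ht]; linarith
    push_cast
    calc (∑ i ∈ Finset.Icc 1 B, (i : ℝ) ^ (-s)) + ((B:ℝ)+1) ^ (-s)
        ≤ (B:ℝ) ^ (1-s) / (1-s) + (((B:ℝ)+1) ^ (1-s) - (B:ℝ) ^ (1-s)) / (1-s) :=
          add_le_add ih key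
      _ = ((B:ℝ)+1) ^ (1-s) / (1-s) := by ring

/-- Deterministic consequences of order-statistics regularity: if the (nonincreasing,
nonnegative) order statistics `e 1 ≥ e 2 ≥ ⋯ ≥ e n` of a tuple of nonnegative reals satisfy
`c₁ (n/i)^{1/(τ−1)} ≤ e i ≤ c₂ (n/i)^{1/(τ−1)}` for `⌈n^ε⌉ ≤ i ≤ n`, then for every
`i` with `⌊n^{1−2ε(τ−1)}⌋ ≤ i ≤ ⌊n^{1−1.1ε(τ−1)}⌋` one has `n^ε ≤ e i ≤ n^{3ε}`, and
`C₁ n^{1−1.1ε(τ−2)} ≤ ∑ e i ≤ C₂ n^{1−1.1ε(τ−2)}` over that window. -/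
theorem orderStat_window_bounds (τ ε c₁ c₂ : ℝ) (hτ : 2 < τ)
    (hε : ε ∈ Set.Ioo 0 (1 / (2 * τ - 1))) (hc₁ : 0 < c₁) (hc₂ : 0 < c₂) :
    ∃ C₁ C₂ : ℝ, 0 < C₁ ∧ 0 < C₂ ∧ ∃ n₀ : ℕ, ∀ n : ℕ, n₀ ≤ n →
      ∀ e : ℕ → ℝ,
      (∀ i : ℕ, 1 ≤ i → i ≤ n → 0 ≤ e i) →
      (∀ i j : ℕ, 1 ≤ i → i ≤ j → j ≤ n → e j ≤ e i) →
      (∀ i : ℕ, ⌈(n : ℝ) ^ ε⌉₊ ≤ i → i ≤ n →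
        c₁ * ((n : ℝ) / i) ^ (1 / (τ - 1)) ≤ e i ∧
        e i ≤ c₂ * ((n : ℝ) / i) ^ (1 / (τ - 1))) →
      ((∀ i : ℕ, ⌊(n : ℝ) ^ (1 - 2 * ε * (τ - 1))⌋₊ ≤ i →
          i ≤ ⌊(n : ℝ) ^ (1 - 1.1 * ε * (τ - 1))⌋₊ →
          (n : ℝ) ^ ε ≤ e i ∧ e i ≤ (n : ℝ) ^ (3 * ε)) ∧
       C₁ * (n : ℝ) ^ (1 - 1.1 * ε * (τ - 2)) ≤
          ∑ i ∈ Finset.Icc ⌊(n : ℝ) ^ (1 - 2 * ε * (τ - 1))⌋₊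
              ⌊(n : ℝ) ^ (1 - 1.1 * ε * (τ - 1))⌋₊, e i ∧
       (∑ i ∈ Finset.Icc ⌊(n : ℝ) ^ (1 - 2 * ε * (τ - 1))⌋₊
              ⌊(n : ℝ) ^ (1 - 1.1 * ε * (τ - 1))⌋₊, e i) ≤
          C₂ * (n : ℝ) ^ (1 - 1.1 * ε * (τ - 2))) := by
  obtain ⟨hε0, hεlt⟩ := hε
  have hτ1 : (1:ℝ) < τ - 1 := by linarith
  have hτ0 : (0:ℝ) < τ - 1 := by linarith
  have hτne : τ - 1 ≠ 0 := hτ0.ne'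
  set s : ℝ := 1 / (τ - 1) with hsdef
  have hs0 : 0 < s := by positivity
  have hs1 : s < 1 := by rw [hsdef, div_lt_one hτ0]; linarith
  set a : ℝ := 1 - 2 * ε * (τ - 1) with hadef
  set b : ℝ := 1 - 1.1 * ε * (τ - 1) with hbdef
  clear_value s a b
  have h2τ : (0:ℝ) < 2 * τ - 1 := by linarith
  have hε1 : ε * (2 * τ - 1) < 1 := by
    rw [div_eq_mul_inv] at hεlt
    calc ε * (2*τ-1) < 1 * (2*τ-1)⁻¹ * (2*τ-1) := by
          apply mul_lt_mul_of_pos_right hεlt h2τ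
      _ = 1 := by field_simp
  have haε : ε < a := by
    have : 2 * ε * (τ - 1) = ε * (2*τ-1) - ε := by ring
    rw [hadef]; linarith
  have ha0 : 0 < a := lt_trans hε0 haε
  have hετ : 0 < ε * (τ - 1) := mul_pos hε0 hτ0
  have hab : a < b := by rw [hadef, hbdef]; nlinarith
  have hb1 : b < 1 := by rw [hbdef]; nlinarith
  -- eventual bounds
  have key : ∀ (δ c : ℝ), 0 < δ → ∀ᶠ n : ℕ in atTop, c ≤ (n:ℝ) ^ δ := fun δ c hδ =>
    ((tendsto_rpow_atTop hδ).comp tendsto_natCast_atTop_atTop).eventually_ge_atTop c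
  have hev : ∀ᶠ n : ℕ in atTop, 1 ≤ n ∧ 2 ≤ (n:ℝ)^(a-ε) ∧ 2 ≤ (n:ℝ)^a ∧
      1/c₁ ≤ (n:ℝ)^(1.1*ε-ε) ∧ c₂ * 2^s ≤ (n:ℝ)^ε ∧ 2 ≤ (n:ℝ)^(b-a) := by
    filter_upwards [eventually_ge_atTop 1, key (a-ε) 2 (by linarith),
      key a 2 ha0, key (1.1*ε-ε) (1/c₁) (by linarith), key ε (c₂*2^s) hε0,
      key (b-a) 2 (by linarith)] with n h0 h1 h2 h3 h4 h5
    exact ⟨h0, h1, h2, h3, h4, h5⟩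
  obtain ⟨n₀, hn₀⟩ := eventually_atTop.mp hev
  refine ⟨c₁/2, c₂/(1-s), by positivity, div_pos hc₂ (by linarith), n₀, ?_⟩
  intro n hn e he0 hmono hreg
  obtain ⟨hn1, hE1, hE2, hE3, hE4, hE5⟩ := hn₀ n hn
  have hn1R : (1:ℝ) ≤ n := by exact_mod_cast hn1
  have hnpos : (0:ℝ) < n := by linarith
  set A : ℕ := ⌊(n:ℝ)^a⌋₊ with hAdef
  set B : ℕ := ⌊(n:ℝ)^b⌋₊ with hBdef
  have hab_r : (n:ℝ)^a ≤ (n:ℝ)^b := Real.rpow_le_rpow_of_exponent_le hn1R hab.le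
  have hA1 : 1 ≤ A := Nat.le_floor (by push_cast; linarith)
  have hAB : A ≤ B := Nat.floor_le_floor hab_r
  have hBn : B ≤ n := by
    have hbn : (n:ℝ)^b ≤ (n:ℝ) := by
      calc (n:ℝ)^b ≤ (n:ℝ)^(1:ℝ) := Real.rpow_le_rpow_of_exponent_le hn1R hb1.le
        _ = n := Real.rpow_one _
    have := Nat.floor_le_floor hbn
    simpa using this
  have hεone : (1:ℝ) ≤ (n:ℝ)^ε := Real.one_le_rpow hn1R hε0.le
  have hceilA : ⌈(n:ℝ)^ε⌉₊ ≤ A := by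
    apply Nat.le_floor
    have h1 : ((⌈(n:ℝ)^ε⌉₊ : ℝ)) < (n:ℝ)^ε + 1 := Nat.ceil_lt_add_one (by positivity)
    have h2 : (n:ℝ)^ε * (n:ℝ)^(a-ε) = (n:ℝ)^a := by
      rw [← Real.rpow_add hnpos]; ring_nf
    have h3 : (n:ℝ)^ε * 2 ≤ (n:ℝ)^ε * (n:ℝ)^(a-ε) :=
      mul_le_mul_of_nonneg_left hE1 (by positivity)
    linarith
  have hA_half : (n:ℝ)^a / 2 ≤ (A:ℝ) := by
    have := Nat.sub_one_lt_floor ((n:ℝ)^a)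
    rw [← hAdef] at this
    linarith
  have hApos : (0:ℝ) < (A:ℝ) := by exact_mod_cast hA1
  have hAle : (A:ℝ) ≤ (n:ℝ)^a := Nat.floor_le (by positivity)
  have hBle : (B:ℝ) ≤ (n:ℝ)^b := Nat.floor_le (by positivity)
  have hBgt : (n:ℝ)^b - 1 < (B:ℝ) := by
    have := Nat.sub_one_lt_floor ((n:ℝ)^b)
    rw [← hBdef] at this; linarith
  clear_value A B
  -- exponent identities
  have hexp1 : (1-b) * s = 1.1 * ε := by
    rw [hbdef, hsdef]; field_simp; try ring
  have hexp2 : (1-a) * s = 2 * ε := by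
    rw [hadef, hsdef]; field_simp; try ring
  -- pointwise bounds on the window
  have hpt : ∀ i : ℕ, A ≤ i → i ≤ B →
      c₁ * (n:ℝ)^(1.1*ε) ≤ e i ∧ e i ≤ c₂ * 2^s * (n:ℝ)^(2*ε) := by
    intro i hAi hiB
    have hi1 : 1 ≤ i := hA1.trans hAi
    have hin : i ≤ n := hiB.trans hBn
    obtain ⟨hlo, hhi⟩ := hreg i (hceilA.trans hAi) hin
    have hipos : (0:ℝ) < (i:ℝ) := by exact_mod_cast hi1
    constructor
    · -- lower bound
      have hiBr : (i:ℝ) ≤ (n:ℝ)^b := le_trans (by exact_mod_cast hiB) hBle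
      have h1 : (n:ℝ)/(n:ℝ)^b ≤ (n:ℝ)/(i:ℝ) := by gcongr
      have h2 : (n:ℝ)^(1-b) = (n:ℝ)/(n:ℝ)^b := by
        rw [Real.rpow_sub hnpos, Real.rpow_one]
      have h3 : (n:ℝ)^(1.1*ε) ≤ ((n:ℝ)/(i:ℝ))^s := by
        rw [← hexp1, Real.rpow_mul hnpos.le]
        apply Real.rpow_le_rpow (by positivity) _ hs0.le
        rw [h2]; exact h1
      calc c₁ * (n:ℝ)^(1.1*ε) ≤ c₁ * ((n:ℝ)/(i:ℝ))^s := by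
            apply mul_le_mul_of_nonneg_left h3 hc₁.le
        _ ≤ e i := hlo
    · -- upper bound
      have hiAr : (n:ℝ)^a / 2 ≤ (i:ℝ) := le_trans hA_half (by exact_mod_cast hAi)
      have hhalf : (0:ℝ) < (n:ℝ)^a / 2 := by positivity
      have h4 : (n:ℝ)/(i:ℝ) ≤ (n:ℝ)/((n:ℝ)^a/2) := by gcongr
      have h5 : (n:ℝ)/((n:ℝ)^a/2) = 2 * ((n:ℝ)^(1-a)) := by
        rw [Real.rpow_sub hnpos, Real.rpow_one]
        field_simp
      have h6 : ((n:ℝ)/(i:ℝ))^s ≤ 2^s * (n:ℝ)^(2*ε) := by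
        calc ((n:ℝ)/(i:ℝ))^s ≤ (2 * ((n:ℝ)^(1-a)))^s := by
              apply Real.rpow_le_rpow (by positivity) _ hs0.le
              rw [← h5]; exact h4
          _ = 2^s * ((n:ℝ)^(1-a))^s := Real.mul_rpow (by norm_num) (by positivity)
          _ = 2^s * (n:ℝ)^(2*ε) := by
              rw [← Real.rpow_mul hnpos.le, hexp2]
      calc e i ≤ c₂ * ((n:ℝ)/(i:ℝ))^s := hhi
        _ ≤ c₂ * (2^s * (n:ℝ)^(2*ε)) := mul_le_mul_of_nonneg_left h6 hc₂.le
        _ = c₂ * 2^s * (n:ℝ)^(2*ε) := by ring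
  refine ⟨?_, ?_, ?_⟩
  · -- pointwise n^ε ≤ e i ≤ n^(3ε)
    intro i hAi hiB
    obtain ⟨hlo, hhi⟩ := hpt i hAi hiB
    constructor
    · have h1 : (n:ℝ)^(1.1*ε) = (n:ℝ)^(1.1*ε-ε) * (n:ℝ)^ε := by
        rw [← Real.rpow_add hnpos]; ring_nf
      have h2 : (1:ℝ) ≤ c₁ * (n:ℝ)^(1.1*ε-ε) := by
        rw [div_le_iff₀ hc₁] at hE3; linarith [hE3]
      calc (n:ℝ)^ε = 1 * (n:ℝ)^ε := (one_mul _).symm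
        _ ≤ (c₁ * (n:ℝ)^(1.1*ε-ε)) * (n:ℝ)^ε :=
            mul_le_mul_of_nonneg_right h2 (by positivity)
        _ = c₁ * (n:ℝ)^(1.1*ε) := by rw [h1]; ring
        _ ≤ e i := hlo
    · calc e i ≤ c₂ * 2^s * (n:ℝ)^(2*ε) := hhi
        _ ≤ (n:ℝ)^ε * (n:ℝ)^(2*ε) := mul_le_mul_of_nonneg_right hE4 (by positivity)
        _ = (n:ℝ)^(3*ε) := by rw [← Real.rpow_add hnpos]; ring_nf
  · -- lower bound on the sum
    have hcard : (n:ℝ)^b / 2 ≤ ((Finset.Icc A B).card : ℝ) := by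
      rw [Nat.card_Icc, Nat.cast_sub (by omega)]
      push_cast
      have hba : (n:ℝ)^a * (n:ℝ)^(b-a) = (n:ℝ)^b := by
        rw [← Real.rpow_add hnpos]; ring_nf
      have h2 : (n:ℝ)^a * 2 ≤ (n:ℝ)^a * (n:ℝ)^(b-a) :=
        mul_le_mul_of_nonneg_left hE5 (by positivity)
      linarith
    have hsum : ((Finset.Icc A B).card : ℝ) * (c₁ * (n:ℝ)^(1.1*ε)) ≤
        ∑ i ∈ Finset.Icc A B, e i := by
      have := Finset.card_nsmul_le_sum (Finset.Icc A B) e (c₁ * (n:ℝ)^(1.1*ε))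
        (fun i hi => by
          rw [Finset.mem_Icc] at hi
          exact (hpt i hi.1 hi.2).1)
      simpa [nsmul_eq_mul] using this
    have hbe : (n:ℝ)^b * (n:ℝ)^(1.1*ε) = (n:ℝ)^(1-1.1*ε*(τ-2)) := by
      rw [← Real.rpow_add hnpos]
      congr 1
      rw [hbdef]; ring
    calc c₁/2 * (n:ℝ)^(1-1.1*ε*(τ-2)) = (n:ℝ)^b / 2 * (c₁ * (n:ℝ)^(1.1*ε)) := by
          rw [← hbe]; ring
      _ ≤ ((Finset.Icc A B).card : ℝ) * (c₁ * (n:ℝ)^(1.1*ε)) := by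
          apply mul_le_mul_of_nonneg_right hcard (by positivity)
      _ ≤ ∑ i ∈ Finset.Icc A B, e i := hsum
  · -- upper bound on the sum
    have hstep : ∑ i ∈ Finset.Icc A B, e i ≤
        ∑ i ∈ Finset.Icc A B, c₂ * (n:ℝ)^s * (i:ℝ)^(-s) := by
      apply Finset.sum_le_sum
      intro i hi
      rw [Finset.mem_Icc] at hi
      have hi1 : 1 ≤ i := hA1.trans hi.1
      have hin : i ≤ n := hi.2.trans hBn
      have hipos : (0:ℝ) < (i:ℝ) := by exact_mod_cast hi1
      obtain ⟨_, hhi⟩ := hreg i (hceilA.trans hi.1) hin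
      calc e i ≤ c₂ * ((n:ℝ)/(i:ℝ))^s := hhi
        _ = c₂ * (n:ℝ)^s * (i:ℝ)^(-s) := by
            rw [Real.div_rpow hnpos.le hipos.le, Real.rpow_neg hipos.le]
            ring
    have hsub : ∑ i ∈ Finset.Icc A B, c₂ * (n:ℝ)^s * (i:ℝ)^(-s) ≤
        c₂ * (n:ℝ)^s * ∑ i ∈ Finset.Icc 1 B, (i:ℝ)^(-s) := by
      rw [← Finset.mul_sum]
      apply mul_le_mul_of_nonneg_left _ (by positivity)
      apply Finset.sum_le_sum_of_subset_of_nonneg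
      · exact Finset.Icc_subset_Icc_left hA1
      · intro i _ _; positivity
    have hzeta := sum_rpow_neg_le s hs0 hs1 B
    have hBt : (B:ℝ)^(1-s) ≤ ((n:ℝ)^b)^(1-s) :=
      Real.rpow_le_rpow (by positivity) hBle (by linarith)
    have hfin : (n:ℝ)^s * ((n:ℝ)^b)^(1-s) = (n:ℝ)^(1-1.1*ε*(τ-2)) := by
      rw [← Real.rpow_mul hnpos.le, ← Real.rpow_add hnpos]
      congr 1
      rw [hbdef, hsdef]; field_simp; try ring
    calc ∑ i ∈ Finset.Icc A B, e i
        ≤ c₂ * (n:ℝ)^s * ∑ i ∈ Finset.Icc 1 B, (i:ℝ)^(-s) := hstep.trans hsub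
      _ ≤ c₂ * (n:ℝ)^s * ((B:ℝ)^(1-s)/(1-s)) := by
          apply mul_le_mul_of_nonneg_left hzeta (by positivity)
      _ ≤ c₂ * (n:ℝ)^s * (((n:ℝ)^b)^(1-s)/(1-s)) := by
          apply mul_le_mul_of_nonneg_left _ (by positivity)
          apply div_le_div_of_nonneg_right hBt (by linarith)
      _ = c₂/(1-s) * ((n:ℝ)^s * ((n:ℝ)^b)^(1-s)) := by ring
      _ = c₂/(1-s) * (n:ℝ)^(1-1.1*ε*(τ-2)) := by rw [hfin]
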